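/- arXiv:2508.06172 — 2 statements merged into one kernel-verified Lean document; each statement's English description precedes it below -/
import Mathlib

section
/- Let C be a finite set of task points, let w > 0 be the service time, let c : C × C → ℝ be nonnegative travel times, and let b, t, s : C → ℝ satisfy t(i) ≥ 0 and s(i) = b(i) + t(i) for all i ∈ C. Let A ⊆ C × C be a set of arcs such that b(j) ≥ s(i) + w + c(i,j) for every (i,j) ∈ A. Then A contains no directed cycle on C: there is no finite sequence i_1, i_2, …, i_m of task points (m ≥ 1) with (i_t, i_{t+1}) ∈ A for 1 ≤ t < m and (i_m, i_1) ∈ A. -/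
/-! The arrival time `b` is a strictly increasing potential along arcs: the time-flow constraint
gives `b i + t i + w + c i j ≤ b j` with `t i + w + c i j ≥ w > 0`. Along a cycle returning to its
start this would force `b i < b i`. -/

open Relation

theorem Relation.ReflTransGen.of_chain {α : Type*} {R : α → α → Prop} {m : ℕ} {p : ℕ → α}
    (hchain : ∀ r, r + 1 < m → R (p r) (p (r + 1))) :
    ∀ r, r < m → ReflTransGen R (p 0) (p r)
  | 0, _ => .refl
  | r + 1, hr => (of_chain hchain r (by omega)).tail (hchain r hr)

theorem Relation.TransGen.irrefl_of_lt_potential {α β : Type*} [Preorder β] {R : α → α → Prop}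
    (f : α → β) (hf : ∀ i j, R i j → f i < f j) {x : α} : ¬ TransGen R x x := fun hx ↦
  lt_irrefl (f x) <| by simpa [transGen_eq_self] using hx.lift f hf

theorem not_exists_cycle_of_lt_potential {α β : Type*} [Preorder β] {R : α → α → Prop}
    (f : α → β) (hf : ∀ i j, R i j → f i < f j) :
    ¬ ∃ (m : ℕ) (p : ℕ → α), 1 ≤ m ∧
        (∀ r, r + 1 < m → R (p r) (p (r + 1))) ∧ R (p (m - 1)) (p 0) := by
  rintro ⟨m, p, hm, hchain, hclose⟩
  have hpath : ReflTransGen R (p 0) (p (m - 1)) := .of_chain hchain (m - 1) (by omega)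
  exact TransGen.irrefl_of_lt_potential f hf (TransGen.tail' hpath hclose)

theorem stmt2_general {C : Type*}
    (w : ℝ) (hw : 0 < w)
    (c : C → C → ℝ) (hc : ∀ i j, 0 ≤ c i j)
    (b t s : C → ℝ)
    (ht : ∀ i, 0 ≤ t i)
    (hs : ∀ i, s i = b i + t i)
    (A : Set (C × C))
    (hA : ∀ a ∈ A, b a.2 ≥ s a.1 + w + c a.1 a.2) :
    ¬ ∃ (m : ℕ) (p : ℕ → C), 1 ≤ m ∧
        (∀ r, r + 1 < m → (p r, p (r + 1)) ∈ A) ∧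
        (p (m - 1), p 0) ∈ A := by
  have arrival_lt : ∀ i j, (i, j) ∈ A → b i < b j := fun i j hij ↦ by
    have := hA (i, j) hij
    linarith [ht i, hc i j, hs i]
  exact not_exists_cycle_of_lt_potential (R := fun i j ↦ (i, j) ∈ A) b arrival_lt

/-- Under the time-flow constraints (with service time `w > 0`,
nonnegative travel times `c`, waiting times `t ≥ 0`, start times `s = b + t`, and
`b j ≥ s i + w + c i j` for every arc `(i,j) ∈ A`), the arc set `A` contains no
directed cycle of task points. -/
theorem stmt2 {C : Type*} [Fintype C]
    (w : ℝ) (hw : 0 < w)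
    (c : C → C → ℝ) (hc : ∀ i j, 0 ≤ c i j)
    (b t s : C → ℝ)
    (ht : ∀ i, 0 ≤ t i)
    (hs : ∀ i, s i = b i + t i)
    (A : Set (C × C))
    (hA : ∀ a ∈ A, b a.2 ≥ s a.1 + w + c a.1 a.2) :
    ¬ ∃ (m : ℕ) (p : ℕ → C), 1 ≤ m ∧
        (∀ r, r + 1 < m → (p r, p (r + 1)) ∈ A) ∧
        (p (m - 1), p 0) ∈ A :=
  stmt2_general w hw c hc b t s ht hs A hA
end

section
/- Let T be a finite set of tasks partitioned into finitely many routes, each route being a finite sequence ordering its tasks; let w ≥ 0 be the service time, let d assign a nonnegative travel time to each pair of consecutive tasks on a route, and let g assign a nonnegative required start-time separation g(i,j) = g(j,i) ≥ 0 to every pair of tasks i, j lying on different routes. Then there exists an assignment of start times s : T → ℝ such that (a) for every pair of consecutive tasks p, q on the same route, s(q) ≥ s(p) + w + d(p,q), and (b) for every pair of tasks i, j on different routes, |s(i) − s(j)| ≥ g(i,j). In other words, any task assignment and routing scheme can be extended to a feasible schedule by inserting waiting times. -/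
/-!
Number the routes `0, 1, …, m - 1` and let `M ≥ 0` bound every `w + d p q`. Run route `k`
inside the window `[k B, k B + L M]`, its task in position `n` starting at `k B + n M`,
where `L` bounds all positions. Consecutive tasks of a route are then exactly `M` apart,
and choosing the window spacing `B` at least `L M` plus a bound on `g` keeps tasks of
different routes far enough apart.
-/

theorem List.Nodup.idxOf_eq_of_getElem?_eq_some {α : Type*} [BEq α] [LawfulBEq α] {l : List α}
    (hl : l.Nodup) {n : ℕ} {a : α} (h : l[n]? = some a) : l.idxOf a = n := by
  obtain ⟨hn, rfl⟩ := List.getElem?_eq_some_iff.mp h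
  exact hl.idxOf_getElem n hn

theorem sub_le_abs_sub_of_ne {B M : ℝ} {L k k' n n' : ℕ} (hB : 0 ≤ B) (hM : 0 ≤ M)
    (hk : k ≠ k') (hn : n ≤ L) (hn' : n' ≤ L) :
    B - L * M ≤ |(k * B + n * M) - (k' * B + n' * M)| := by
  wlog hlt : k < k' generalizing k k' n n'
  · rw [abs_sub_comm]
    exact this hk.symm hn' hn (hk.lt_or_gt.resolve_left hlt)
  have hkk : (k : ℝ) + 1 ≤ k' := by exact_mod_cast hlt
  have hnL : (n : ℝ) ≤ L := by exact_mod_cast hn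
  have hn'0 : (0 : ℝ) ≤ n' := n'.cast_nonneg
  rw [abs_sub_comm]
  refine le_trans ?_ (le_abs_self _)
  nlinarith

theorem stmt4_general {T ρ : Type*} [Fintype T] [Fintype ρ]
    (route : ρ → List T)
    (hpart : ∀ i : T, ∃! r : ρ, i ∈ route r)
    (hnodup : ∀ r : ρ, (route r).Nodup)
    (w : ℝ)
    (d : T → T → ℝ)
    (g : T → T → ℝ) :
    ∃ s : T → ℝ,
      (∀ r : ρ, ∀ n : ℕ, ∀ pq : T × T,
        (route r)[n]? = some pq.1 → (route r)[n + 1]? = some pq.2 →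
        s pq.2 ≥ s pq.1 + w + d pq.1 pq.2) ∧
      (∀ i j : T, ∀ r r' : ρ, r ≠ r' → i ∈ route r → j ∈ route r' →
        |s i - s j| ≥ g i j) := by
  classical
  choose R _ hRuniq using hpart
  let k : T → ℕ := fun i => Fintype.equivFin ρ (R i)
  let pos : T → ℕ := fun i => (route (R i)).idxOf i
  obtain ⟨M₀, hM₀⟩ := Finite.exists_le fun pq : T × T => w + d pq.1 pq.2
  obtain ⟨G₀, hG₀⟩ := Finite.exists_le fun pq : T × T => g pq.1 pq.2
  obtain ⟨L, hL⟩ := Finite.exists_le pos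
  set M := max M₀ 0
  set B := max G₀ 0 + L * M
  have hslot : ∀ r n p, (route r)[n]? = some p → R p = r ∧ pos p = n := fun r n p h => by
    obtain rfl := (hRuniq p r (List.mem_of_getElem? h)).symm
    exact ⟨rfl, (hnodup _).idxOf_eq_of_getElem?_eq_some h⟩
  refine ⟨fun i => k i * B + pos i * M, ?_, ?_⟩
  · rintro r n ⟨p, q⟩ hp hq
    obtain ⟨hRp, hpos_p⟩ := hslot r n p hp
    obtain ⟨hRq, hpos_q⟩ := hslot r (n + 1) q hq
    have hk : k p = k q := by simp only [k, hRp, hRq]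
    have hM : w + d p q ≤ M := (hM₀ (p, q)).trans (le_max_left _ _)
    simp only [hk, hpos_p, hpos_q, Nat.cast_succ]
    linarith
  · intro i j r r' hrr' hi hj
    have hk : k i ≠ k j := fun h => hrr' <| by
      rw [hRuniq i r hi, hRuniq j r' hj]
      exact (Fintype.equivFin ρ).injective (Fin.val_injective h)
    calc g i j ≤ max G₀ 0 := (hG₀ (i, j)).trans (le_max_left _ _)
      _ = B - L * M := by ring
      _ ≤ _ := sub_le_abs_sub_of_ne (by positivity) (le_max_right _ _) hk (hL i) (hL j)

/-- Given a finite set of tasks partitioned into finitely many routes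
(each route a duplicate-free list ordering its tasks), a service time `w ≥ 0`,
nonnegative travel times `d`, and a nonnegative symmetric required separation `g`
between tasks on different routes, there exists an assignment of start times `s`
such that (a) consecutive tasks on the same route are separated by at least
`w + d p q`, and (b) tasks on different routes satisfy `|s i - s j| ≥ g i j`. -/
theorem stmt4 {T ρ : Type*} [Fintype T] [Fintype ρ]
    (route : ρ → List T)
    (hpart : ∀ i : T, ∃! r : ρ, i ∈ route r)
    (hnodup : ∀ r : ρ, (route r).Nodup)
    (w : ℝ) (hw : 0 ≤ w)
    (d : T → T → ℝ) (hd : ∀ i j, 0 ≤ d i j)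
    (g : T → T → ℝ) (hg0 : ∀ i j, 0 ≤ g i j)
    (hgsymm : ∀ i j, g i j = g j i) :
    ∃ s : T → ℝ,
      (∀ r : ρ, ∀ n : ℕ, ∀ pq : T × T,
        (route r)[n]? = some pq.1 → (route r)[n + 1]? = some pq.2 →
        s pq.2 ≥ s pq.1 + w + d pq.1 pq.2) ∧
      (∀ i j : T, ∀ r r' : ρ, r ≠ r' → i ∈ route r → j ∈ route r' →
        |s i - s j| ≥ g i j) :=
  stmt4_general route hpart hnodup w d g
end
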